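/- arXiv:1210.0685 — 6 statements merged into one kernel-verified Lean document; each statement's English description precedes it below -/
import Mathlib

section
/- Let a > 1 and b ∈ (0, 1/5]. If a^4 · e^{-a^2} = b, then √(log(1/b)) ≤ a ≤ 2·√(log(1/b)). -/
/- With `b = a⁴ e^{-a²}` one has `log (1 / b) = a² - 4 log a`. The lower bound is `log a ≥ 0`; the
upper bound `a² / 4 ≤ a² - 4 log a` follows from `log (a²) ≤ a² / e ≤ 3 a² / 8`. -/

open Real

lemma exp_one_mul_log_le {x : ℝ} (hx : 0 < x) : exp 1 * log x ≤ x := by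
  simpa only [exp_log hx] using exp_one_mul_le_exp (x := log x)

lemma four_mul_log_le_three_quarters_mul_sq {a : ℝ} (ha : 0 < a) :
    4 * log a ≤ 3 / 4 * a ^ 2 := by
  have hsq : exp 1 * (2 * log a) ≤ a ^ 2 := by
    simpa only [log_pow, Nat.cast_ofNat] using exp_one_mul_log_le (pow_pos ha 2)
  have he : (8 : ℝ) / 3 < exp 1 := by linarith [exp_one_gt_d9]
  nlinarith [sq_nonneg a]

lemma log_one_div_pow_four_mul_exp_neg_sq {a : ℝ} (ha : 0 < a) :
    log (1 / (a ^ 4 * exp (-a ^ 2))) = a ^ 2 - 4 * log a := by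
  rw [one_div, log_inv, log_mul (by positivity) (exp_ne_zero _), log_exp, log_pow]
  push_cast
  ring

theorem stmt_0_general (a b : ℝ) (ha : 1 < a)
    (h : a ^ 4 * Real.exp (-a ^ 2) = b) :
    Real.sqrt (Real.log (1 / b)) ≤ a ∧ a ≤ 2 * Real.sqrt (Real.log (1 / b)) := by
  have ha0 : 0 < a := zero_lt_one.trans ha
  rw [← h, log_one_div_pow_four_mul_exp_neg_sq ha0]
  constructor
  · rw [sqrt_le_left ha0.le]
    linarith [log_nonneg ha.le]
  · have : a / 2 ≤ √(a ^ 2 - 4 * log a) :=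
      le_sqrt_of_sq_le (by linarith [four_mul_log_le_three_quarters_mul_sq ha0])
    linarith

theorem stmt_0 (a b : ℝ) (ha : 1 < a) (hb0 : 0 < b) (hb : b ≤ 1/5)
    (h : a ^ 4 * Real.exp (-a ^ 2) = b) :
    Real.sqrt (Real.log (1 / b)) ≤ a ∧ a ≤ 2 * Real.sqrt (Real.log (1 / b)) :=
  stmt_0_general a b ha h
end

section
/- With the same setup (D₀ with unit-norm columns, W with unit-norm columns orthogonal to corresponding columns of D₀, ‖v‖₂ = 1, t ≥ 0), let P_J(t) denote the orthogonal projector onto the column span of [D(t)]_J. Then ‖(I − P_J(t))·[D₀]_J‖_F² ≤ t²·‖v_J‖₂². -/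
open Real Matrix

private lemma proj_contract {n : ℕ} (P : Matrix (Fin n) (Fin n) ℝ)
    (hPsymm : P.IsSymm) (hPidem : P * P = P) (x : Fin n → ℝ) :
    ∑ i, (x i - P.mulVec x i)^2 ≤ ∑ i, (x i)^2 := by
  have hPP : P.mulVec (P.mulVec x) = P.mulVec x := by
    rw [Matrix.mulVec_mulVec, hPidem]
  have hkey : (P.mulVec x) ⬝ᵥ (P.mulVec x) = (P.mulVec x) ⬝ᵥ x := by
    rw [Matrix.dotProduct_mulVec, ← Matrix.mulVec_transpose, hPsymm.eq, hPP]
  have hsym : x ⬝ᵥ (P.mulVec x) = (P.mulVec x) ⬝ᵥ x := dotProduct_comm _ _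
  have hnn : 0 ≤ (P.mulVec x) ⬝ᵥ (P.mulVec x) :=
    Finset.sum_nonneg fun i _ => mul_self_nonneg _
  have expand : ∑ i, (x i - P.mulVec x i)^2
      = ∑ i, (x i)^2 - 2 * (x ⬝ᵥ (P.mulVec x)) + (P.mulVec x) ⬝ᵥ (P.mulVec x) := by
    simp only [dotProduct, Finset.mul_sum, ← Finset.sum_add_distrib,
      ← Finset.sum_sub_distrib]
    exact Finset.sum_congr rfl fun i _ => by ring
  rw [expand, hsym, hkey]; nlinarith

private lemma two_sub_two_cos_le (θ : ℝ) : 2 - 2 * Real.cos θ ≤ θ ^ 2 := by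
  have h1 : Real.sin (θ / 2) ^ 2 = 1 / 2 - Real.cos θ / 2 := by
    have := Real.sin_sq_eq_half_sub (θ / 2)
    rw [show 2 * (θ / 2) = θ by ring] at this
    linarith
  have h2 : Real.sin (θ / 2) ^ 2 ≤ (θ / 2) ^ 2 := Real.sin_sq_le_sq
  nlinarith

/-- Lemma 2, Eq. (18): with `P_J(t)` the orthogonal projector onto the span of the
columns of `D(t)` indexed by `J`, one has `‖(I - P_J(t))[D₀]_J‖_F² ≤ t² ‖v_J‖₂²`. -/
theorem stmt_4 {m p : ℕ} (D₀ W : Matrix (Fin m) (Fin p) ℝ) (v : Fin p → ℝ) (t : ℝ)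
    (ht : 0 ≤ t)
    (hD : ∀ j, ∑ i, (D₀ i j) ^ 2 = 1)
    (hW : ∀ j, ∑ i, (W i j) ^ 2 = 1)
    (horth : ∀ j, ∑ i, W i j * D₀ i j = 0)
    (hv : ∑ j, (v j) ^ 2 = 1)
    (Dt : Matrix (Fin m) (Fin p) ℝ)
    (hDt : ∀ i j, Dt i j = Real.cos (v j * t) * D₀ i j + Real.sin (v j * t) * W i j)
    (J : Finset (Fin p))
    (P : Matrix (Fin m) (Fin m) ℝ)
    -- P is an orthogonal projector:
    (hPsymm : P.IsSymm) (hPidem : P * P = P)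
    -- whose range is the span of the columns of D(t) indexed by J:
    (hPfix : ∀ j ∈ J, P.mulVec (fun i => Dt i j) = fun i => Dt i j)
    (hPran : ∀ y : Fin m → ℝ,
      P.mulVec y ∈ Submodule.span ℝ {c : Fin m → ℝ | ∃ j ∈ J, c = fun i => Dt i j}) :
    ∑ j ∈ J, ∑ i, (D₀ i j - P.mulVec (fun i' => D₀ i' j) i) ^ 2
      ≤ t ^ 2 * ∑ j ∈ J, (v j) ^ 2 := by
  rw [Finset.mul_sum]
  apply Finset.sum_le_sum
  intro j hj
  set θ := v j * t with hθ
  set x : Fin m → ℝ := fun i => D₀ i j - Dt i j with hx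
  have hlin : P.mulVec x =
      fun i => P.mulVec (fun i' => D₀ i' j) i - Dt i j := by
    have : x = (fun i => D₀ i j) - (fun i => Dt i j) := rfl
    rw [this, Matrix.mulVec_sub, hPfix j hj]
    rfl
  have hrw : ∀ i, D₀ i j - P.mulVec (fun i' => D₀ i' j) i = x i - P.mulVec x i := by
    intro i
    rw [hlin]
    simp only [hx]
    ring
  calc ∑ i, (D₀ i j - P.mulVec (fun i' => D₀ i' j) i) ^ 2
      = ∑ i, (x i - P.mulVec x i) ^ 2 := Finset.sum_congr rfl fun i _ => by rw [hrw]
    _ ≤ ∑ i, (x i) ^ 2 := proj_contract P hPsymm hPidem x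
    _ = 2 - 2 * Real.cos θ := by
        have hexp : ∑ i, (x i) ^ 2
            = (1 - Real.cos θ)^2 * (∑ i, (D₀ i j)^2)
              + Real.sin θ ^ 2 * (∑ i, (W i j)^2)
              - 2 * (1 - Real.cos θ) * Real.sin θ * (∑ i, W i j * D₀ i j) := by
          simp only [Finset.mul_sum, ← Finset.sum_add_distrib, ← Finset.sum_sub_distrib]
          refine Finset.sum_congr rfl fun i _ => ?_
          simp only [hx, hDt i j, ← hθ]
          ring
        rw [hexp, hD j, hW j, horth j]
        nlinarith [Real.sin_sq_add_cos_sq θ]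
    _ ≤ θ ^ 2 := two_sub_two_cos_le θ
    _ = t ^ 2 * v j ^ 2 := by rw [hθ]; ring
end

section
/- Let D ∈ ℝ^{m×p} have unit-norm columns and coherence μ with k·μ < 1. Then for any J with |J| ≤ k, every off-diagonal entry of Θ_J = (D_Jᵀ D_J)^{-1} satisfies |[Θ_J]_{ij}| ≤ μ/(1 − kμ) for i ≠ j, and every off-diagonal entry of Θ_J² satisfies |[Θ_J²]_{ij}| ≤ 2μ/(1 − kμ)² for i ≠ j. -/
open Real Matrix

/-- Submatrix of the columns of `D` indexed by `J`. -/
def colSub {m p : ℕ} (D : Matrix (Fin m) (Fin p) ℝ) (J : Finset (Fin p)) :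
    Matrix (Fin m) {j // j ∈ J} ℝ := fun i j => D i j.1

/-- Gram matrix of the columns of `D` indexed by `J`. -/
def gram {m p : ℕ} (D : Matrix (Fin m) (Fin p) ℝ) (J : Finset (Fin p)) :
    Matrix {j // j ∈ J} {j // j ∈ J} ℝ := (colSub D J)ᵀ * colSub D J

/-!
Write `G = I + H` with `|H i j| ≤ μ` off the diagonal and `H i i = 0`, and `Θ = G⁻¹`, so that
`Θ = I - H Θ`. Taking absolute values entrywise and summing over a column bounds every column
sum `S` of `|Θ|` by `S ≤ 1 + (n - 1) μ S`, i.e. `S ≤ 1 / (1 - (n - 1) μ)`. Feeding this back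
into `Θ = I - H Θ` gives `|Θ i j| ≤ μ S` off the diagonal, and splitting the sum
`(Θ²) i j = Θ i i Θ i j + ∑_{c ≠ i} Θ i c Θ c j` gives the bound `2 μ S²` on `Θ²`.
-/

namespace Matrix

variable {ι : Type*} [Fintype ι] [DecidableEq ι] {G Θ : Matrix ι ι ℝ} {μ : ℝ}

theorem sum_erase_abs_le_of_abs_offDiag_le (hoff : ∀ i j, i ≠ j → |G i j| ≤ μ) (i : ι) :
    ∑ c ∈ Finset.univ.erase i, |G i c| ≤ ((Fintype.card ι : ℝ) - 1) * μ := by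
  calc ∑ c ∈ Finset.univ.erase i, |G i c|
      ≤ ∑ _c ∈ Finset.univ.erase i, μ :=
        Finset.sum_le_sum fun c hc => hoff i c (Finset.ne_of_mem_erase hc).symm
    _ = ((Fintype.card ι : ℝ) - 1) * μ := by
        rw [Finset.sum_const, Finset.card_erase_of_mem (Finset.mem_univ i), Finset.card_univ,
          nsmul_eq_mul, Nat.cast_pred (Fintype.card_pos_iff.2 ⟨i⟩)]

theorem det_ne_zero_of_diag_eq_one_of_abs_offDiag_le (hdiag : ∀ i, G i i = 1)
    (hoff : ∀ i j, i ≠ j → |G i j| ≤ μ) (hμ : ((Fintype.card ι : ℝ) - 1) * μ < 1) :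
    G.det ≠ 0 :=
  det_ne_zero_of_sum_row_lt_diag fun i => by
    simpa only [Real.norm_eq_abs, hdiag, abs_one] using
      (sum_erase_abs_le_of_abs_offDiag_le hoff i).trans_lt hμ

section RightInverse

variable (hdiag : ∀ i, G i i = 1) (hoff : ∀ i j, i ≠ j → |G i j| ≤ μ) (hGΘ : G * Θ = 1)
include hdiag hoff hGΘ

theorem abs_apply_le_of_mul_eq_one (i j : ι) :
    |Θ i j| ≤ (1 : Matrix ι ι ℝ) i j + μ * (∑ c, |Θ c j| - |Θ i j|) := by
  have hrow : Θ i j = (1 : Matrix ι ι ℝ) i j - ∑ c ∈ Finset.univ.erase i, G i c * Θ c j := by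
    have h := congrFun (congrFun hGΘ i) j
    rw [mul_apply, ← Finset.add_sum_erase _ _ (Finset.mem_univ i), hdiag, one_mul] at h
    linarith
  have hrest : |∑ c ∈ Finset.univ.erase i, G i c * Θ c j| ≤ μ * (∑ c, |Θ c j| - |Θ i j|) :=
    calc |∑ c ∈ Finset.univ.erase i, G i c * Θ c j|
        ≤ ∑ c ∈ Finset.univ.erase i, |G i c| * |Θ c j| := by
          simpa only [abs_mul] using Finset.abs_sum_le_sum_abs (fun c => G i c * Θ c j) _
      _ ≤ ∑ c ∈ Finset.univ.erase i, μ * |Θ c j| :=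
          Finset.sum_le_sum fun c hc =>
            mul_le_mul_of_nonneg_right (hoff i c (Finset.ne_of_mem_erase hc).symm)
              (abs_nonneg (Θ c j))
      _ = μ * (∑ c, |Θ c j| - |Θ i j|) := by
          rw [← Finset.mul_sum, Finset.sum_erase_eq_sub (Finset.mem_univ i)]
  have hone : |(1 : Matrix ι ι ℝ) i j| = (1 : Matrix ι ι ℝ) i j := by
    rw [one_apply]; split_ifs <;> simp
  calc |Θ i j| ≤ |(1 : Matrix ι ι ℝ) i j| + |∑ c ∈ Finset.univ.erase i, G i c * Θ c j| := by
        rw [hrow]; exact abs_sub _ _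
    _ ≤ _ := by rw [hone]; gcongr

variable (hμ : ((Fintype.card ι : ℝ) - 1) * μ < 1)
include hμ

theorem sum_abs_apply_le_of_mul_eq_one (j : ι) :
    ∑ i, |Θ i j| ≤ 1 / (1 - ((Fintype.card ι : ℝ) - 1) * μ) := by
  set S := ∑ i, |Θ i j|
  have hS : S ≤ 1 + μ * ((Fintype.card ι : ℝ) * S - S) :=
    calc S ≤ ∑ i, ((1 : Matrix ι ι ℝ) i j + μ * (S - |Θ i j|)) :=
          Finset.sum_le_sum fun i _ => abs_apply_le_of_mul_eq_one hdiag hoff hGΘ i j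
      _ = 1 + μ * ((Fintype.card ι : ℝ) * S - S) := by
          rw [Finset.sum_add_distrib, ← Finset.mul_sum, Finset.sum_sub_distrib,
            Finset.sum_const, Finset.card_univ, nsmul_eq_mul]
          simp only [one_apply, Finset.sum_ite_eq', Finset.mem_univ, if_true]
          rfl
  rw [le_div_iff₀ (by linarith)]
  linarith

theorem abs_apply_le_of_mul_eq_one_of_ne {i j : ι} (hij : i ≠ j) :
    |Θ i j| ≤ μ / (1 - ((Fintype.card ι : ℝ) - 1) * μ) := by
  have hμ0 : 0 ≤ μ := (abs_nonneg _).trans (hoff i j hij)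
  have hentry := abs_apply_le_of_mul_eq_one hdiag hoff hGΘ i j
  rw [one_apply_ne hij, zero_add] at hentry
  calc |Θ i j| ≤ μ * ∑ c, |Θ c j| := by nlinarith [abs_nonneg (Θ i j)]
    _ ≤ μ * (1 / (1 - ((Fintype.card ι : ℝ) - 1) * μ)) := by
        gcongr; exact sum_abs_apply_le_of_mul_eq_one hdiag hoff hGΘ hμ j
    _ = _ := mul_one_div _ _

theorem abs_mul_self_apply_le_of_mul_eq_one_of_ne {i j : ι} (hij : i ≠ j) :
    |(Θ * Θ) i j| ≤ 2 * μ / (1 - ((Fintype.card ι : ℝ) - 1) * μ) ^ 2 := by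
  set β := 1 - ((Fintype.card ι : ℝ) - 1) * μ
  have hβ : 0 < β := by linarith
  have hμ0 : 0 ≤ μ := (abs_nonneg _).trans (hoff i j hij)
  have hcol := sum_abs_apply_le_of_mul_eq_one hdiag hoff hGΘ hμ
  have hoffΘ : ∀ {a b : ι}, a ≠ b → |Θ a b| ≤ μ / β :=
    abs_apply_le_of_mul_eq_one_of_ne hdiag hoff hGΘ hμ
  have hdiagΘ : |Θ i i| ≤ 1 / β :=
    (Finset.single_le_sum (fun c _ => abs_nonneg (Θ c i)) (Finset.mem_univ i)).trans (hcol i)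
  calc |(Θ * Θ) i j| ≤ ∑ c, |Θ i c| * |Θ c j| := by
        simpa only [mul_apply, abs_mul] using
          Finset.abs_sum_le_sum_abs (fun c => Θ i c * Θ c j) Finset.univ
    _ = |Θ i i| * |Θ i j| + ∑ c ∈ Finset.univ.erase i, |Θ i c| * |Θ c j| :=
        (Finset.add_sum_erase _ _ (Finset.mem_univ i)).symm
    _ ≤ 1 / β * (μ / β) + ∑ c ∈ Finset.univ.erase i, μ / β * |Θ c j| := by
        gcongr with c hc
        · exact hoffΘ hij
        · exact hoffΘ (Finset.ne_of_mem_erase hc).symm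
    _ ≤ 1 / β * (μ / β) + μ / β * ∑ c, |Θ c j| := by
        rw [← Finset.mul_sum]
        gcongr
        exact Finset.erase_subset _ _
    _ ≤ 1 / β * (μ / β) + μ / β * (1 / β) := by gcongr; exact hcol j
    _ = 2 * μ / β ^ 2 := by field_simp; ring

end RightInverse

end Matrix

theorem gram_apply {m p : ℕ} (D : Matrix (Fin m) (Fin p) ℝ) (J : Finset (Fin p))
    (a b : {j // j ∈ J}) : gram D J a b = ∑ l, D l a * D l b := by
  simp only [_root_.gram, colSub, mul_apply, transpose_apply]

/-- Entrywise off-diagonal bounds on `Θ_J = (D_Jᵀ D_J)⁻¹` and on `Θ_J²` for an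
incoherent dictionary. -/
theorem stmt_7 {m p : ℕ} (k : ℕ) (D : Matrix (Fin m) (Fin p) ℝ) (μ : ℝ)
    (hcol : ∀ j, ∑ i, (D i j) ^ 2 = 1)
    (hμ : ∀ i j, i ≠ j → |∑ l, D l i * D l j| ≤ μ)
    (hkμ : (k : ℝ) * μ < 1)
    (J : Finset (Fin p)) (hJ : J.card ≤ k) :
    ∀ a b : {j // j ∈ J}, a ≠ b →
      |(gram D J)⁻¹ a b| ≤ μ / (1 - (k : ℝ) * μ) ∧
      |((gram D J)⁻¹ * (gram D J)⁻¹) a b| ≤ 2 * μ / (1 - (k : ℝ) * μ) ^ 2 := by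
  intro a b hab
  have hdiag : ∀ i, gram D J i i = 1 := fun i => by simpa only [gram_apply, sq] using hcol i
  have hoff : ∀ i j, i ≠ j → |gram D J i j| ≤ μ := fun i j hij => by
    simpa only [gram_apply] using hμ i j (Subtype.coe_ne_coe.2 hij)
  have hμ0 : 0 ≤ μ := (abs_nonneg _).trans (hoff a b hab)
  have hβ : 1 - (k : ℝ) * μ ≤ 1 - ((Fintype.card {j // j ∈ J} : ℝ) - 1) * μ := by
    rw [Fintype.card_coe]; nlinarith [(Nat.cast_le (α := ℝ)).2 hJ]
  have hkβ : 0 < 1 - (k : ℝ) * μ := by linarith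
  have hsmall : ((Fintype.card {j // j ∈ J} : ℝ) - 1) * μ < 1 := by linarith
  have hinv : gram D J * (gram D J)⁻¹ = 1 := mul_nonsing_inv _
    (isUnit_iff_ne_zero.2 (det_ne_zero_of_diag_eq_one_of_abs_offDiag_le hdiag hoff hsmall))
  constructor
  · calc _ ≤ _ := abs_apply_le_of_mul_eq_one_of_ne hdiag hoff hinv hsmall hab
      _ ≤ μ / (1 - (k : ℝ) * μ) := by gcongr
  · calc _ ≤ _ := abs_mul_self_apply_le_of_mul_eq_one_of_ne hdiag hoff hinv hsmall hab
      _ ≤ 2 * μ / (1 - (k : ℝ) * μ) ^ 2 := by gcongr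
end

section
/- Let x ∈ ℝ^m, J ⊆ {1,…,p}, D ∈ ℝ^{m×p} with D_Jᵀ D_J invertible, s ∈ {−1,1}^{|J|}, λ ≥ 0, and define α̂ ∈ ℝ^p by α̂_J = (D_Jᵀ D_J)^{-1}(D_Jᵀ x − λs) and α̂_{Jᶜ} = 0. If sign(α̂_J) = s and ‖D_{Jᶜ}ᵀ(I − P_J)x‖_∞ + λ·‖D_{Jᶜ}ᵀ D_J (D_Jᵀ D_J)^{-1}‖_∞ < λ, then α̂ is the unique minimizer of α ↦ ½‖x − Dα‖₂² + λ‖α‖₁ over ℝ^p. -/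
/-!
Write `F` for the Lasso objective, `r = x - D α̂` and `w = Dᵀ r`. Expanding the square gives
`F α - F α̂ = ½ ‖D (α - α̂)‖² + ∑ⱼ (λ |αⱼ| - λ |α̂ⱼ| - (αⱼ - α̂ⱼ) wⱼ)`.
The closed form of `α̂` makes `D_Jᵀ r = λ s`, and `sign α̂_J = s` turns this into the subgradient
condition `α̂ⱼ wⱼ = λ |α̂ⱼ|`, so every summand is nonnegative. Off `J`,
`D_{Jᶜ}ᵀ r = D_{Jᶜ}ᵀ (I - P_J) x + λ D_{Jᶜ}ᵀ D_J (D_Jᵀ D_J)⁻¹ s`, so the certificate gives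
`|wⱼ| < λ` and the summand is positive once `αⱼ ≠ 0`. If `α` vanishes off `J`, then `α - α̂` is
supported on `J`, where `D` is injective, and the quadratic term is positive.
-/

open Real Matrix

/-- ℓ∞-norm of a finitely indexed real vector. -/
noncomputable def linfVec {ι : Type*} [Fintype ι] (x : ι → ℝ) : ℝ :=
  sSup {r : ℝ | ∃ i : ι, r = |x i|}

/-- Operator ℓ∞-norm (maximum absolute row sum) of a real matrix. -/
noncomputable def linfOp {ι κ : Type*} [Fintype ι] [Fintype κ] (A : Matrix ι κ ℝ) : ℝ :=
  sSup {r : ℝ | ∃ i : ι, r = ∑ j, |A i j|}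

/-- Submatrix of the columns of `D` outside `J`. -/
def colSubC {m p : ℕ} (D : Matrix (Fin m) (Fin p) ℝ) (J : Finset (Fin p)) :
    Matrix (Fin m) {j // j ∉ J} ℝ := fun i j => D i j.1

/-- Orthogonal projector onto the span of the columns of `D` indexed by `J`
(assuming the corresponding Gram matrix is invertible). -/
noncomputable def projJ {m p : ℕ} (D : Matrix (Fin m) (Fin p) ℝ) (J : Finset (Fin p)) :
    Matrix (Fin m) (Fin m) ℝ := colSub D J * (gram D J)⁻¹ * (colSub D J)ᵀ

/-- Closed-form candidate solution of the Lasso supported on `J` with sign vector `s`. -/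
noncomputable def lassoSol {m p : ℕ} (D : Matrix (Fin m) (Fin p) ℝ) (J : Finset (Fin p))
    (x : Fin m → ℝ) (s : {j // j ∈ J} → ℝ) (lam : ℝ) : Fin p → ℝ := fun j =>
  if h : j ∈ J then
    ((gram D J)⁻¹.mulVec (fun j' => (∑ i, D i j'.1 * x i) - lam * s j')) ⟨j, h⟩
  else 0

/-- The Lasso objective `½‖x − Dα‖₂² + λ‖α‖₁`. -/
noncomputable def lassoObj {m p : ℕ} (D : Matrix (Fin m) (Fin p) ℝ) (x : Fin m → ℝ)
    (lam : ℝ) (α : Fin p → ℝ) : ℝ :=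
  (1 / 2) * ∑ i, (x i - D.mulVec α i) ^ 2 + lam * ∑ j, |α j|

namespace Real

theorem sign_mul_self_eq_abs (r : ℝ) : sign r * r = |r| := by
  rcases lt_trichotomy r 0 with hr | rfl | hr
  · rw [sign_of_neg hr, abs_of_neg hr]; ring
  · simp
  · rw [sign_of_pos hr, abs_of_pos hr, one_mul]

theorem abs_sign_le_one (r : ℝ) : |sign r| ≤ 1 := by
  rcases sign_apply_eq r with h | h | h <;> simp [h]

end Real

theorem le_sSup_setOf_exists_eq {ι : Type*} [Finite ι] (f : ι → ℝ) (i : ι) :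
    f i ≤ sSup {r : ℝ | ∃ i, r = f i} :=
  le_csSup ((Set.finite_range f).subset (by rintro _ ⟨k, rfl⟩; exact ⟨k, rfl⟩)).bddAbove ⟨i, rfl⟩

section LinfNorms

variable {ι κ : Type*} [Fintype ι] [Fintype κ]

theorem abs_le_linfVec (v : ι → ℝ) (i : ι) : |v i| ≤ linfVec v :=
  le_sSup_setOf_exists_eq (fun i => |v i|) i

theorem sum_abs_le_linfOp (A : Matrix ι κ ℝ) (i : ι) : ∑ j, |A i j| ≤ linfOp A :=
  le_sSup_setOf_exists_eq (fun i => ∑ j, |A i j|) i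

theorem abs_mulVec_le_linfOp (A : Matrix ι κ ℝ) {v : κ → ℝ} (hv : ∀ j, |v j| ≤ 1) (i : ι) :
    |(A *ᵥ v) i| ≤ linfOp A :=
  calc |(A *ᵥ v) i| ≤ ∑ j, |A i j * v j| := Finset.abs_sum_le_sum_abs _ _
    _ ≤ ∑ j, |A i j| := Finset.sum_le_sum fun j _ => by
        rw [abs_mul]; exact mul_le_of_le_one_right (abs_nonneg _) (hv j)
    _ ≤ linfOp A := sum_abs_le_linfOp A i

end LinfNorms

/-- The Bregman gap of `t ↦ lam * |t|` from `a` to `b` along the slope `w`: it is nonnegative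
for all `b` exactly when `w` is a subgradient at `a`. -/
def absGap (lam a b w : ℝ) : ℝ := lam * |b| - lam * |a| - (b - a) * w

theorem absGap_eq (lam b : ℝ) {a w : ℝ} (h : a * w = lam * |a|) :
    absGap lam a b w = lam * |b| - b * w := by
  unfold absGap; linarith

theorem mul_le_mul_abs_of_abs_le {b w lam : ℝ} (hw : |w| ≤ lam) : b * w ≤ lam * |b| :=
  calc b * w ≤ |b| * |w| := (le_abs_self _).trans (abs_mul b w).le
    _ ≤ lam * |b| := by rw [mul_comm]; exact mul_le_mul_of_nonneg_right hw (abs_nonneg b)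

theorem mul_lt_mul_abs_of_abs_lt {b w lam : ℝ} (hb : b ≠ 0) (hw : |w| < lam) :
    b * w < lam * |b| :=
  calc b * w ≤ |b| * |w| := (le_abs_self _).trans (abs_mul b w).le
    _ < lam * |b| := by rw [mul_comm]; exact mul_lt_mul_of_pos_right hw (abs_pos.2 hb)

theorem absGap_nonneg (b : ℝ) {lam a w : ℝ} (h : a * w = lam * |a|) (hw : |w| ≤ lam) :
    0 ≤ absGap lam a b w := by
  rw [absGap_eq lam b h]; linarith [mul_le_mul_abs_of_abs_le (b := b) hw]

theorem absGap_pos {lam a b w : ℝ} (h : a * w = lam * |a|) (hw : |w| < lam) (hab : b ≠ a) :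
    0 < absGap lam a b w := by
  obtain rfl : a = 0 := by
    by_contra ha
    exact (mul_lt_mul_abs_of_abs_lt ha hw).ne h
  rw [absGap_eq lam b h]
  linarith [mul_lt_mul_abs_of_abs_lt hab hw]

section Lasso

variable {m p : ℕ}

theorem lassoObj_eq_add_absGap (D : Matrix (Fin m) (Fin p) ℝ) (x : Fin m → ℝ) (lam : ℝ)
    (a b : Fin p → ℝ) :
    lassoObj D x lam b = lassoObj D x lam a + (1 / 2) * ∑ i, (D *ᵥ (b - a)) i ^ 2 +
      ∑ j, absGap lam (a j) (b j) ((Dᵀ *ᵥ (x - D *ᵥ a)) j) := by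
  set r := x - D *ᵥ a
  set e := b - a
  have hres : ∀ i, x i - (D *ᵥ b) i = r i - (D *ᵥ e) i := by
    intro i; simp [r, e, mulVec_sub]
  have hcross : ∑ i, r i * (D *ᵥ e) i = ∑ j, e j * (Dᵀ *ᵥ r) j := by
    change r ⬝ᵥ (D *ᵥ e) = e ⬝ᵥ (Dᵀ *ᵥ r)
    rw [dotProduct_mulVec, mulVec_transpose, dotProduct_comm]
  have hr : ∀ i, x i - (D *ᵥ a) i = r i := fun _ => rfl
  have he : ∀ j, b j - a j = e j := fun _ => rfl
  have hsq : ∀ i, (r i - (D *ᵥ e) i) ^ 2 = r i ^ 2 - 2 * (r i * (D *ᵥ e) i) + (D *ᵥ e) i ^ 2 :=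
    fun _ => by ring
  simp only [lassoObj, absGap, hres, hr, he, hsq, Finset.sum_add_distrib, Finset.sum_sub_distrib,
    ← Finset.mul_sum, hcross]
  ring

theorem sum_sq_pos_of_ne_zero {ι : Type*} [Fintype ι] {v : ι → ℝ} (hv : v ≠ 0) :
    0 < ∑ i, v i ^ 2 := by
  obtain ⟨i, hi⟩ := Function.ne_iff.1 hv
  exact Finset.sum_pos' (fun i _ => sq_nonneg (v i)) ⟨i, Finset.mem_univ i, sq_pos_of_ne_zero hi⟩

theorem lassoObj_lt_of_strict_subgradient (D : Matrix (Fin m) (Fin p) ℝ) (x : Fin m → ℝ)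
    (lam : ℝ) {a : Fin p → ℝ} (J : Finset (Fin p))
    (hsub : ∀ j, a j * (Dᵀ *ᵥ (x - D *ᵥ a)) j = lam * |a j| ∧ |(Dᵀ *ᵥ (x - D *ᵥ a)) j| ≤ lam)
    (hstrict : ∀ j ∉ J, |(Dᵀ *ᵥ (x - D *ᵥ a)) j| < lam)
    (hinj : ∀ e : Fin p → ℝ, (∀ j ∉ J, e j = 0) → D *ᵥ e = 0 → e = 0)
    {b : Fin p → ℝ} (hb : b ≠ a) : lassoObj D x lam a < lassoObj D x lam b := by
  rw [lassoObj_eq_add_absGap D x lam a b]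
  have hgap : ∀ j, 0 ≤ absGap lam (a j) (b j) ((Dᵀ *ᵥ (x - D *ᵥ a)) j) :=
    fun j => absGap_nonneg _ (hsub j).1 (hsub j).2
  have hquad : 0 ≤ ∑ i, (D *ᵥ (b - a)) i ^ 2 := Finset.sum_nonneg fun i _ => sq_nonneg _
  by_cases hoff : ∀ j ∉ J, b j = a j
  · have hDe : D *ᵥ (b - a) ≠ 0 := fun h =>
      hb (sub_eq_zero.1 (hinj _ (fun j hj => sub_eq_zero.2 (hoff j hj)) h))
    linarith [sum_sq_pos_of_ne_zero hDe, Finset.sum_nonneg fun j (_ : j ∈ Finset.univ) => hgap j]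
  · push Not at hoff
    obtain ⟨j, hj, hbj⟩ := hoff
    have := Finset.sum_pos' (fun j _ => hgap j)
      ⟨j, Finset.mem_univ j, absGap_pos (hsub j).1 (hstrict j hj) hbj⟩
    linarith

theorem colSub_mulVec_restrict (D : Matrix (Fin m) (Fin p) ℝ) (J : Finset (Fin p))
    {v : Fin p → ℝ} (hv : ∀ j ∉ J, v j = 0) :
    colSub D J *ᵥ (fun j : {j // j ∈ J} => v j) = D *ᵥ v := by
  funext i
  simp only [mulVec, dotProduct, colSub]
  rw [Finset.sum_coe_sort J fun j => D i j * v j]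
  exact Finset.sum_subset (Finset.subset_univ J) fun j _ hj => by simp [hv j hj]

theorem eq_zero_of_mulVec_eq_zero_of_isUnit_gram {D : Matrix (Fin m) (Fin p) ℝ}
    {J : Finset (Fin p)} (hG : IsUnit (gram D J)) {e : Fin p → ℝ} (he : ∀ j ∉ J, e j = 0)
    (hDe : D *ᵥ e = 0) : e = 0 := by
  have hGe : gram D J *ᵥ (fun j : {j // j ∈ J} => e j) = 0 := by
    rw [_root_.gram, ← mulVec_mulVec, colSub_mulVec_restrict D J he, hDe, mulVec_zero]
  have heJ := (mulVec_injective_iff_isUnit.2 hG) (hGe.trans (mulVec_zero _).symm)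
  funext j
  by_cases hj : j ∈ J
  · exact congrFun heJ ⟨j, hj⟩
  · exact he j hj

theorem lassoSol_apply_of_mem (D : Matrix (Fin m) (Fin p) ℝ) {J : Finset (Fin p)}
    (x : Fin m → ℝ) (s : {j // j ∈ J} → ℝ) (lam : ℝ) {j : Fin p} (hj : j ∈ J) :
    lassoSol D J x s lam j = ((gram D J)⁻¹ *ᵥ ((colSub D J)ᵀ *ᵥ x - lam • s)) ⟨j, hj⟩ := by
  rw [lassoSol, dif_pos hj]
  rfl

theorem lassoSol_apply_of_notMem (D : Matrix (Fin m) (Fin p) ℝ) {J : Finset (Fin p)}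
    (x : Fin m → ℝ) (s : {j // j ∈ J} → ℝ) (lam : ℝ) {j : Fin p} (hj : j ∉ J) :
    lassoSol D J x s lam j = 0 :=
  dif_neg hj

theorem mulVec_lassoSol (D : Matrix (Fin m) (Fin p) ℝ) (J : Finset (Fin p)) (x : Fin m → ℝ)
    (s : {j // j ∈ J} → ℝ) (lam : ℝ) :
    D *ᵥ lassoSol D J x s lam =
      colSub D J *ᵥ ((gram D J)⁻¹ *ᵥ ((colSub D J)ᵀ *ᵥ x - lam • s)) := by
  rw [← colSub_mulVec_restrict D J fun j hj => lassoSol_apply_of_notMem D x s lam hj]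
  congr 1
  funext j
  exact lassoSol_apply_of_mem D x s lam j.2

theorem colSub_transpose_mulVec_lassoSol_residual {D : Matrix (Fin m) (Fin p) ℝ}
    {J : Finset (Fin p)} (hG : IsUnit (gram D J)) (x : Fin m → ℝ) (s : {j // j ∈ J} → ℝ)
    (lam : ℝ) : (colSub D J)ᵀ *ᵥ (x - D *ᵥ lassoSol D J x s lam) = lam • s := by
  rw [mulVec_lassoSol, mulVec_sub, mulVec_mulVec, mulVec_mulVec, ← _root_.gram,
    mul_nonsing_inv _ ((isUnit_iff_isUnit_det _).1 hG), one_mulVec, sub_sub_cancel]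

theorem colSubC_transpose_mulVec_lassoSol_residual (D : Matrix (Fin m) (Fin p) ℝ)
    (J : Finset (Fin p)) (x : Fin m → ℝ) (s : {j // j ∈ J} → ℝ) (lam : ℝ) :
    (colSubC D J)ᵀ *ᵥ (x - D *ᵥ lassoSol D J x s lam) =
      (colSubC D J)ᵀ *ᵥ (x - projJ D J *ᵥ x) +
        lam • (((colSubC D J)ᵀ * colSub D J * (gram D J)⁻¹) *ᵥ s) := by
  simp only [mulVec_lassoSol, projJ, mulVec_sub, mulVec_smul, ← mulVec_mulVec]
  abel

theorem abs_transpose_mulVec_lassoSol_residual_lt {D : Matrix (Fin m) (Fin p) ℝ}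
    {J : Finset (Fin p)} {x : Fin m → ℝ} {s : {j // j ∈ J} → ℝ} {lam : ℝ} (hlam : 0 ≤ lam)
    (hs : ∀ j, |s j| ≤ 1)
    (hcert : linfVec ((colSubC D J)ᵀ *ᵥ (x - projJ D J *ᵥ x)) +
        lam * linfOp ((colSubC D J)ᵀ * colSub D J * (gram D J)⁻¹) < lam)
    {j : Fin p} (hj : j ∉ J) : |(Dᵀ *ᵥ (x - D *ᵥ lassoSol D J x s lam)) j| < lam := by
  set M := (colSubC D J)ᵀ * colSub D J * (gram D J)⁻¹
  set c := (colSubC D J)ᵀ *ᵥ (x - projJ D J *ᵥ x)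
  have hres : (Dᵀ *ᵥ (x - D *ᵥ lassoSol D J x s lam)) j = c ⟨j, hj⟩ + lam * (M *ᵥ s) ⟨j, hj⟩ :=
    congrFun (colSubC_transpose_mulVec_lassoSol_residual D J x s lam) ⟨j, hj⟩
  calc |(Dᵀ *ᵥ (x - D *ᵥ lassoSol D J x s lam)) j|
      ≤ |c ⟨j, hj⟩| + lam * |(M *ᵥ s) ⟨j, hj⟩| := by
        rw [hres, ← abs_of_nonneg hlam, ← abs_mul, abs_of_nonneg hlam]
        exact abs_add_le _ _
    _ ≤ linfVec c + lam * linfOp M := by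
        gcongr
        · exact abs_le_linfVec c _
        · exact abs_mulVec_le_linfOp M hs _
    _ < lam := hcert

end Lasso

theorem stmt_9_general {m p : ℕ} (x : Fin m → ℝ) (J : Finset (Fin p))
    (D : Matrix (Fin m) (Fin p) ℝ) (hG : IsUnit (gram D J))
    (s : {j // j ∈ J} → ℝ)
    (lam : ℝ) (hlam : 0 ≤ lam)
    (hsign : ∀ j : {j // j ∈ J},
      Real.sign (((gram D J)⁻¹.mulVec
        (fun j' => (∑ i, D i j'.1 * x i) - lam * s j')) j) = s j)
    (hcert :
      linfVec (fun j : {j // j ∉ J} =>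
          ∑ i, D i j.1 * (x i - (projJ D J).mulVec x i)) +
        lam * linfOp ((colSubC D J)ᵀ * colSub D J * (gram D J)⁻¹) < lam) :
    ∀ α : Fin p → ℝ, α ≠ lassoSol D J x s lam →
      lassoObj D x lam (lassoSol D J x s lam) < lassoObj D x lam α := by
  intro α hα
  have hsign' : ∀ j, Real.sign (((gram D J)⁻¹ *ᵥ ((colSub D J)ᵀ *ᵥ x - lam • s)) j) = s j :=
    hsign
  have hs : ∀ j, |s j| ≤ 1 := fun j => hsign' j ▸ Real.abs_sign_le_one _
  have hoff := fun j (hj : j ∉ J) =>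
    abs_transpose_mulVec_lassoSol_residual_lt hlam hs hcert hj
  refine lassoObj_lt_of_strict_subgradient D x lam J (fun j => ?_) hoff
    (fun e => eq_zero_of_mulVec_eq_zero_of_isUnit_gram hG) hα
  by_cases hj : j ∈ J
  · have hw : (Dᵀ *ᵥ (x - D *ᵥ lassoSol D J x s lam)) j = lam * s ⟨j, hj⟩ :=
      congrFun (colSub_transpose_mulVec_lassoSol_residual hG x s lam) ⟨j, hj⟩
    rw [hw, lassoSol_apply_of_mem D x s lam hj, abs_mul, abs_of_nonneg hlam]
    refine ⟨?_, mul_le_of_le_one_right hlam (hs _)⟩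
    rw [← hsign' ⟨j, hj⟩, ← Real.sign_mul_self_eq_abs]
    ring
  · rw [lassoSol_apply_of_notMem D x s lam hj, zero_mul, abs_zero, mul_zero]
    exact ⟨rfl, (hoff j hj).le⟩

/-- Exact sign-recovery certificate for the Lasso: under the sign condition and the
strict dual feasibility condition, the closed-form vector `α̂` is the unique minimizer. -/
theorem stmt_9 {m p : ℕ} (x : Fin m → ℝ) (J : Finset (Fin p))
    (D : Matrix (Fin m) (Fin p) ℝ) (hG : IsUnit (gram D J))
    (s : {j // j ∈ J} → ℝ) (hs : ∀ j, s j = 1 ∨ s j = -1)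
    (lam : ℝ) (hlam : 0 ≤ lam)
    (hsign : ∀ j : {j // j ∈ J},
      Real.sign (((gram D J)⁻¹.mulVec
        (fun j' => (∑ i, D i j'.1 * x i) - lam * s j')) j) = s j)
    (hcert :
      linfVec (fun j : {j // j ∉ J} =>
          ∑ i, D i j.1 * (x i - (projJ D J).mulVec x i)) +
        lam * linfOp ((colSubC D J)ᵀ * colSub D J * (gram D J)⁻¹) < lam) :
    ∀ α : Fin p → ℝ, α ≠ lassoSol D J x s lam →
      lassoObj D x lam (lassoSol D J x s lam) < lassoObj D x lam α :=
  stmt_9_general x J D hG s lam hlam hsign hcert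
end

section
/- Let D₀ ∈ ℝ^{m×p} with restricted isometry constant δ_k(D₀) < 1 and let 0 ≤ t < √(1 − δ_k(D₀)). Set C_t = 1/(√(1−δ_k(D₀)) − t). For any W with unit-norm columns orthogonal to the corresponding columns of D₀, any unit v ∈ ℝ^p, any 0 ≤ t' ≤ t and any J with |J| = k, the matrix D_J(t')ᵀ D_J(t') is invertible and: ‖D_J(t')‖₂ ≤ C_t, ‖(D_J(t')ᵀD_J(t'))^{-1}‖₂ ≤ C_t², and ‖D_J(t')·(D_J(t')ᵀD_J(t'))^{-1}‖₂ ≤ C_t. -/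
/-!
Each column of `D(t')` is the corresponding unit column of `D₀` rotated by the angle `vⱼ t'`
towards the orthogonal unit column of `W`, so it moves by at most `|vⱼ| t'`; bounding the
spectral norm by the Frobenius norm gives `‖D_J(t') − D₀_J‖₂ ≤ t' ‖v‖ ≤ t`. With the RIP of `D₀`
this yields `(√(1−δ) − t)‖z‖ ≤ ‖D_J(t') z‖ ≤ (√(1+δ) + t)‖z‖ ≤ C_t ‖z‖`. The lower bound makes the
Gram matrix `G` invertible, and for `w = G⁻¹ z` the identity `‖D_J(t') w‖² = ⟪w, z⟫ ≤ ‖w‖ ‖z‖`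
turns it into the bounds on `G⁻¹` and on `D_J(t') G⁻¹`.
-/

open Real Matrix

noncomputable def l2norm {ι : Type*} [Fintype ι] (x : ι → ℝ) : ℝ :=
  Real.sqrt (∑ i, (x i) ^ 2)

section L2Norm

variable {ι : Type*} [Fintype ι]

theorem l2norm_eq_norm (x : ι → ℝ) : l2norm x = ‖WithLp.toLp 2 x‖ := by
  simp [l2norm, EuclideanSpace.norm_eq, sq_abs]

theorem l2norm_nonneg (x : ι → ℝ) : 0 ≤ l2norm x := Real.sqrt_nonneg _

theorem l2norm_sq (x : ι → ℝ) : l2norm x ^ 2 = ∑ i, x i ^ 2 :=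
  Real.sq_sqrt (Finset.sum_nonneg fun _ _ => sq_nonneg _)

theorem l2norm_eq_zero {x : ι → ℝ} : l2norm x = 0 ↔ x = 0 := by
  rw [l2norm_eq_norm, norm_eq_zero, WithLp.toLp_eq_zero]

theorem abs_l2norm_sub_l2norm_le (x y : ι → ℝ) : |l2norm x - l2norm y| ≤ l2norm (x - y) := by
  simpa only [l2norm_eq_norm, WithLp.toLp_sub] using abs_norm_sub_norm_le _ _

theorem l2norm_smul (c : ℝ) (x : ι → ℝ) : l2norm (c • x) = |c| * l2norm x := by
  rw [l2norm_eq_norm, l2norm_eq_norm, WithLp.toLp_smul, norm_smul, Real.norm_eq_abs]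

theorem l2norm_sum_le {κ : Type*} [Fintype κ] (f : κ → ι → ℝ) :
    l2norm (∑ j, f j) ≤ ∑ j, l2norm (f j) := by
  simpa only [l2norm_eq_norm, WithLp.toLp_sum] using norm_sum_le _ _

theorem dotProduct_le_l2norm_mul (x y : ι → ℝ) : x ⬝ᵥ y ≤ l2norm x * l2norm y := by
  have h := real_inner_le_norm (WithLp.toLp 2 y) (WithLp.toLp 2 x)
  rwa [EuclideanSpace.inner_eq_star_dotProduct, star_trivial, mul_comm, ← l2norm_eq_norm,
    ← l2norm_eq_norm] at h

theorem l2norm_le_l2norm_of_abs_le {x y : ι → ℝ} (h : ∀ i, |x i| ≤ |y i|) :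
    l2norm x ≤ l2norm y :=
  Real.sqrt_le_sqrt <| Finset.sum_le_sum fun i _ => sq_le_sq.2 (h i)

theorem l2norm_restrict_le (x : ι → ℝ) (s : Finset ι) :
    l2norm (fun i : s => x i) ≤ l2norm x := by
  refine Real.sqrt_le_sqrt ?_
  rw [Finset.sum_coe_sort s fun i => x i ^ 2]
  exact Finset.sum_le_sum_of_subset_of_nonneg s.subset_univ fun _ _ _ => sq_nonneg _

theorem sqrt_mul_l2norm_le_of_mul_sum_sq_le {κ : Type*} [Fintype κ] {c : ℝ} {x : ι → ℝ}
    {y : κ → ℝ} (h : c * ∑ i, x i ^ 2 ≤ ∑ j, y j ^ 2) : √c * l2norm x ≤ l2norm y := by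
  rw [l2norm, l2norm, ← Real.sqrt_mul' c (Finset.sum_nonneg fun _ _ => sq_nonneg _)]
  exact Real.sqrt_le_sqrt h

theorem l2norm_le_sqrt_mul_of_sum_sq_le_mul {κ : Type*} [Fintype κ] {c : ℝ} {x : ι → ℝ}
    {y : κ → ℝ} (h : ∑ j, y j ^ 2 ≤ c * ∑ i, x i ^ 2) : l2norm y ≤ √c * l2norm x := by
  rw [l2norm, l2norm, ← Real.sqrt_mul' c (Finset.sum_nonneg fun _ _ => sq_nonneg _)]
  exact Real.sqrt_le_sqrt h

end L2Norm

section MatrixBounds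

variable {ι κ : Type*} [Fintype ι] [Fintype κ]

theorem l2norm_mulVec_le_l2norm_colNorms (E : Matrix ι κ ℝ) (z : κ → ℝ) :
    l2norm (E *ᵥ z) ≤ l2norm (fun j => l2norm (fun i => E i j)) * l2norm z := by
  have hcols : E *ᵥ z = ∑ j, z j • fun i => E i j := by
    ext i
    simp [Matrix.mulVec, dotProduct, Finset.sum_apply, mul_comm]
  calc l2norm (E *ᵥ z) ≤ ∑ j, |z j| * l2norm (fun i => E i j) := by
        simpa only [hcols, l2norm_smul] using l2norm_sum_le fun j => z j • fun i => E i j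
    _ = (fun j => l2norm (fun i => E i j)) ⬝ᵥ fun j => |z j| := by
        simp only [dotProduct, mul_comm]
    _ ≤ l2norm (fun j => l2norm (fun i => E i j)) * l2norm z := by
        refine (dotProduct_le_l2norm_mul _ _).trans_eq ?_
        simp [l2norm, sq_abs]

theorem dotProduct_transpose_mul_self_mulVec (A : Matrix ι κ ℝ) (z : κ → ℝ) :
    z ⬝ᵥ (Aᵀ * A) *ᵥ z = l2norm (A *ᵥ z) ^ 2 := by
  rw [← Matrix.mulVec_mulVec, Matrix.dotProduct_mulVec, Matrix.vecMul_transpose, l2norm_sq]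
  simp [dotProduct, sq]

variable [DecidableEq κ] {A : Matrix ι κ ℝ} {c : ℝ}

theorem isUnit_transpose_mul_self_of_le (hc : 0 < c)
    (hA : ∀ z, c * l2norm z ≤ l2norm (A *ᵥ z)) : IsUnit (Aᵀ * A) := by
  refine Matrix.mulVec_injective_iff_isUnit.1 fun x y hxy => ?_
  have hAxy : l2norm (A *ᵥ (x - y)) = 0 := by
    have h := dotProduct_transpose_mul_self_mulVec A (x - y)
    rw [Matrix.mulVec_sub, hxy, sub_self, dotProduct_zero] at h
    exact pow_eq_zero_iff two_ne_zero |>.1 h.symm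
  have hxy0 : l2norm (x - y) = 0 :=
    le_antisymm (nonpos_of_mul_nonpos_right ((hA _).trans hAxy.le) hc) (l2norm_nonneg _)
  exact sub_eq_zero.1 (l2norm_eq_zero.1 hxy0)

theorem l2norm_mulVec_inv_sq_eq_dotProduct (hc : 0 < c)
    (hA : ∀ z, c * l2norm z ≤ l2norm (A *ᵥ z)) (z : κ → ℝ) :
    l2norm (A *ᵥ (Aᵀ * A)⁻¹ *ᵥ z) ^ 2 = (Aᵀ * A)⁻¹ *ᵥ z ⬝ᵥ z := by
  have hdet := (Matrix.isUnit_iff_isUnit_det _).1 (isUnit_transpose_mul_self_of_le hc hA)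
  rw [← dotProduct_transpose_mul_self_mulVec, Matrix.mulVec_mulVec, Matrix.mul_nonsing_inv _ hdet,
    Matrix.one_mulVec]

theorem l2norm_inv_transpose_mul_self_mulVec_le (hc : 0 < c)
    (hA : ∀ z, c * l2norm z ≤ l2norm (A *ᵥ z)) (z : κ → ℝ) :
    l2norm ((Aᵀ * A)⁻¹ *ᵥ z) ≤ (1 / c) ^ 2 * l2norm z := by
  set w := (Aᵀ * A)⁻¹ *ᵥ z
  have hw : c ^ 2 * l2norm w ^ 2 ≤ l2norm w * l2norm z :=
    calc c ^ 2 * l2norm w ^ 2 = (c * l2norm w) ^ 2 := by ring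
      _ ≤ l2norm (A *ᵥ w) ^ 2 := pow_le_pow_left₀ (by positivity [l2norm_nonneg w]) (hA w) 2
      _ = w ⬝ᵥ z := l2norm_mulVec_inv_sq_eq_dotProduct hc hA z
      _ ≤ l2norm w * l2norm z := dotProduct_le_l2norm_mul w z
  rcases (l2norm_nonneg w).eq_or_lt with hw0 | hw0
  · rw [← hw0]
    positivity [l2norm_nonneg z]
  · rw [div_pow, one_pow, one_div_mul_eq_div, le_div_iff₀ (by positivity)]
    nlinarith

theorem l2norm_mul_inv_transpose_mul_self_mulVec_le (hc : 0 < c)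
    (hA : ∀ z, c * l2norm z ≤ l2norm (A *ᵥ z)) (z : κ → ℝ) :
    l2norm ((A * (Aᵀ * A)⁻¹) *ᵥ z) ≤ 1 / c * l2norm z := by
  rw [← Matrix.mulVec_mulVec]
  refine (pow_le_pow_iff_left₀ (l2norm_nonneg _) (by positivity [l2norm_nonneg z])
    two_ne_zero).1 ?_
  calc l2norm (A *ᵥ (Aᵀ * A)⁻¹ *ᵥ z) ^ 2 = (Aᵀ * A)⁻¹ *ᵥ z ⬝ᵥ z :=
        l2norm_mulVec_inv_sq_eq_dotProduct hc hA z
    _ ≤ l2norm ((Aᵀ * A)⁻¹ *ᵥ z) * l2norm z := dotProduct_le_l2norm_mul _ _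
    _ ≤ (1 / c) ^ 2 * l2norm z * l2norm z := by
        gcongr
        · exact l2norm_nonneg z
        · exact l2norm_inv_transpose_mul_self_mulVec_le hc hA z
    _ = (1 / c * l2norm z) ^ 2 := by ring

end MatrixBounds

theorem norm_cos_smul_add_sin_smul_sub_le {E : Type*} [NormedAddCommGroup E]
    [InnerProductSpace ℝ E] {d w : E} (hd : ‖d‖ = 1) (hw : ‖w‖ = 1) (hdw : inner ℝ d w = 0)
    (θ : ℝ) : ‖cos θ • d + sin θ • w - d‖ ≤ |θ| := by
  have hsq : ‖cos θ • d + sin θ • w - d‖ ^ 2 = 2 - 2 * cos θ := by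
    rw [show cos θ • d + sin θ • w - d = (cos θ - 1) • d + sin θ • w by
      rw [sub_smul, one_smul]; abel, norm_add_sq_real, norm_smul, norm_smul, real_inner_smul_left,
      real_inner_smul_right, hd, hw, hdw, Real.norm_eq_abs, Real.norm_eq_abs, mul_one, mul_one,
      sq_abs, sq_abs]
    nlinarith [sin_sq_add_cos_sq θ]
  refine (pow_le_pow_iff_left₀ (norm_nonneg _) (abs_nonneg θ) two_ne_zero).1 ?_
  rw [hsq, sq_abs]
  linarith [one_sub_sq_div_two_le_cos (x := θ)]

section Perturbation

variable {ι κ : Type*} [Fintype ι] [Fintype κ] {A₀ A : Matrix ι κ ℝ} {t : ℝ}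

theorem abs_l2norm_mulVec_sub_le (A₀ A : Matrix ι κ ℝ) (z : κ → ℝ) :
    |l2norm (A *ᵥ z) - l2norm (A₀ *ᵥ z)| ≤ l2norm ((A - A₀) *ᵥ z) := by
  simpa only [Matrix.sub_mulVec] using abs_l2norm_sub_l2norm_le (A *ᵥ z) (A₀ *ᵥ z)

theorem sub_mul_l2norm_le_l2norm_mulVec {a : ℝ} (hA₀ : ∀ z, a * l2norm z ≤ l2norm (A₀ *ᵥ z))
    (hE : ∀ z, l2norm ((A - A₀) *ᵥ z) ≤ t * l2norm z) (z : κ → ℝ) :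
    (a - t) * l2norm z ≤ l2norm (A *ᵥ z) := by
  have h := (abs_le.1 ((abs_l2norm_mulVec_sub_le A₀ A z).trans (hE z))).1
  linarith [hA₀ z]

/-- `b + t ≤ 1 / (a - t)` because `a * b ≤ 1` and, unless `z = 0`, `a ≤ b`. -/
theorem l2norm_mulVec_le_one_div_sub_mul {a b : ℝ}
    (hA₀ : ∀ z, a * l2norm z ≤ l2norm (A₀ *ᵥ z) ∧ l2norm (A₀ *ᵥ z) ≤ b * l2norm z)
    (hab : a * b ≤ 1) (ht : 0 ≤ t) (hta : t < a)
    (hE : ∀ z, l2norm ((A - A₀) *ᵥ z) ≤ t * l2norm z) (z : κ → ℝ) :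
    l2norm (A *ᵥ z) ≤ 1 / (a - t) * l2norm z := by
  obtain ⟨hlow, hup⟩ := hA₀ z
  have hle : l2norm (A *ᵥ z) ≤ (b + t) * l2norm z := by
    have h := (abs_le.1 ((abs_l2norm_mulVec_sub_le A₀ A z).trans (hE z))).2
    linarith
  have hz := l2norm_nonneg z
  rw [one_div_mul_eq_div, le_div_iff₀ (sub_pos.2 hta)]
  nlinarith [mul_le_mul_of_nonneg_right hle (sub_pos.2 hta).le,
    mul_le_mul_of_nonneg_left (hlow.trans hup) ht, mul_le_mul_of_nonneg_right hab hz,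
    mul_nonneg (sq_nonneg t) hz]

end Perturbation

section RotatedDictionary

variable {ι κ : Type*} [Fintype ι] {D₀ W Dt : Matrix ι κ ℝ} {v : κ → ℝ} {t' : ℝ}

theorem l2norm_rotated_col_sub_le (hD : ∀ j, ∑ i, (D₀ i j) ^ 2 = 1)
    (hW : ∀ j, ∑ i, (W i j) ^ 2 = 1) (horth : ∀ j, ∑ i, W i j * D₀ i j = 0)
    (hDt : ∀ i j, Dt i j = cos (v j * t') * D₀ i j + sin (v j * t') * W i j) (j : κ) :
    l2norm (fun i => Dt i j - D₀ i j) ≤ |v j * t'| := by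
  have hunit : ∀ {x : ι → ℝ}, ∑ i, x i ^ 2 = 1 → ‖WithLp.toLp 2 x‖ = 1 := fun h => by
    rw [← l2norm_eq_norm, l2norm, h, Real.sqrt_one]
  have hcol : (fun i => Dt i j - D₀ i j) = cos (v j * t') • (fun i => D₀ i j)
      + sin (v j * t') • (fun i => W i j) - fun i => D₀ i j := by
    ext i
    simp [hDt]
  rw [l2norm_eq_norm, hcol, WithLp.toLp_sub, WithLp.toLp_add, WithLp.toLp_smul, WithLp.toLp_smul]
  refine norm_cos_smul_add_sin_smul_sub_le (hunit (hD j)) (hunit (hW j)) ?_ _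
  simpa [EuclideanSpace.inner_eq_star_dotProduct, dotProduct] using horth j

end RotatedDictionary

theorem l2norm_colSub_sub_mulVec_le {m p : ℕ} {D₀ Dt : Matrix (Fin m) (Fin p) ℝ}
    {v : Fin p → ℝ} {t' : ℝ} (hcol : ∀ j, l2norm (fun i => Dt i j - D₀ i j) ≤ |v j * t'|)
    (hv : ∑ j, (v j) ^ 2 = 1) (J : Finset (Fin p)) (z : {j // j ∈ J} → ℝ) :
    l2norm ((colSub Dt J - colSub D₀ J) *ᵥ z) ≤ |t'| * l2norm z := by
  have hcolNorms : l2norm (fun j => l2norm (fun i => (colSub Dt J - colSub D₀ J) i j))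
      ≤ |t'| * l2norm (fun j : J => v j) := by
    rw [← l2norm_smul]
    refine l2norm_le_l2norm_of_abs_le fun j => ?_
    rw [abs_of_nonneg (l2norm_nonneg _), Pi.smul_apply, smul_eq_mul, mul_comm]
    exact hcol j
  have hvJ : l2norm (fun j : J => v j) ≤ 1 := by
    simpa [l2norm, hv] using l2norm_restrict_le v J
  calc l2norm ((colSub Dt J - colSub D₀ J) *ᵥ z)
      ≤ l2norm (fun j => l2norm (fun i => (colSub Dt J - colSub D₀ J) i j)) * l2norm z :=
        l2norm_mulVec_le_l2norm_colNorms _ z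
    _ ≤ |t'| * l2norm z := by
        gcongr
        · exact l2norm_nonneg z
        · exact hcolNorms.trans (mul_le_of_le_one_right (abs_nonneg t') hvJ)

theorem stmt_12_general {m p : ℕ} (k : ℕ) (D₀ W : Matrix (Fin m) (Fin p) ℝ) (v : Fin p → ℝ)
    (δ : ℝ)
    -- δ is an admissible RIP constant of order k for D₀:
    (hRIP : ∀ J : Finset (Fin p), J.card = k → ∀ z : {j // j ∈ J} → ℝ,
      (1 - δ) * (∑ j, (z j) ^ 2) ≤ ∑ i, ((colSub D₀ J).mulVec z i) ^ 2 ∧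
      ∑ i, ((colSub D₀ J).mulVec z i) ^ 2 ≤ (1 + δ) * (∑ j, (z j) ^ 2))
    (hD : ∀ j, ∑ i, (D₀ i j) ^ 2 = 1)
    (hW : ∀ j, ∑ i, (W i j) ^ 2 = 1)
    (horth : ∀ j, ∑ i, W i j * D₀ i j = 0)
    (hv : ∑ j, (v j) ^ 2 = 1)
    (t t' : ℝ) (ht0 : 0 ≤ t') (ht't : t' ≤ t) (ht : t < Real.sqrt (1 - δ))
    (Dt : Matrix (Fin m) (Fin p) ℝ)
    (hDt : ∀ i j, Dt i j = Real.cos (v j * t') * D₀ i j + Real.sin (v j * t') * W i j)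
    (J : Finset (Fin p)) (hJ : J.card = k) :
    IsUnit (gram Dt J) ∧
    (∀ z : {j // j ∈ J} → ℝ,
      l2norm ((colSub Dt J).mulVec z) ≤ 1 / (Real.sqrt (1 - δ) - t) * l2norm z) ∧
    (∀ z : {j // j ∈ J} → ℝ,
      l2norm ((gram Dt J)⁻¹.mulVec z) ≤ (1 / (Real.sqrt (1 - δ) - t)) ^ 2 * l2norm z) ∧
    (∀ z : {j // j ∈ J} → ℝ,
      l2norm ((colSub Dt J * (gram Dt J)⁻¹).mulVec z)
        ≤ 1 / (Real.sqrt (1 - δ) - t) * l2norm z) := by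
  have ht_nonneg : 0 ≤ t := ht0.trans ht't
  have hδ : 0 < 1 - δ := Real.sqrt_pos.1 (ht_nonneg.trans_lt ht)
  have hRIP_norm : ∀ z, √(1 - δ) * l2norm z ≤ l2norm (colSub D₀ J *ᵥ z) ∧
      l2norm (colSub D₀ J *ᵥ z) ≤ √(1 + δ) * l2norm z := fun z =>
    ⟨sqrt_mul_l2norm_le_of_mul_sum_sq_le (hRIP J hJ z).1,
      l2norm_le_sqrt_mul_of_sum_sq_le_mul (hRIP J hJ z).2⟩
  have hsqrt_mul : √(1 - δ) * √(1 + δ) ≤ 1 := by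
    rw [← Real.sqrt_mul hδ.le]
    exact Real.sqrt_le_one.2 (by nlinarith [sq_nonneg δ])
  have hE : ∀ z, l2norm ((colSub Dt J - colSub D₀ J) *ᵥ z) ≤ t * l2norm z := fun z =>
    (l2norm_colSub_sub_mulVec_le (l2norm_rotated_col_sub_le hD hW horth hDt) hv J z).trans
      (by rw [abs_of_nonneg ht0]; exact mul_le_mul_of_nonneg_right ht't (l2norm_nonneg z))
  have hc : 0 < √(1 - δ) - t := sub_pos.2 ht
  have hlow := sub_mul_l2norm_le_l2norm_mulVec (fun z => (hRIP_norm z).1) hE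
  exact ⟨isUnit_transpose_mul_self_of_le hc hlow,
    l2norm_mulVec_le_one_div_sub_mul hRIP_norm hsqrt_mul ht_nonneg ht hE,
    l2norm_inv_transpose_mul_self_mulVec_le hc hlow,
    l2norm_mul_inv_transpose_mul_self_mulVec_le hc hlow⟩

/-- Uniform RIP-type bounds for perturbed dictionaries: if `δ_k(D₀) ≤ δ < 1` and
`t < √(1−δ)`, then for every perturbed dictionary `D(t')` with `0 ≤ t' ≤ t` and every
`J` of size `k`, the Gram matrix is invertible and, with `C_t = 1/(√(1−δ)−t)`,
`‖D_J(t')‖₂ ≤ C_t`, `‖(D_J(t')ᵀD_J(t'))⁻¹‖₂ ≤ C_t²`, and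
`‖D_J(t')(D_J(t')ᵀD_J(t'))⁻¹‖₂ ≤ C_t`. -/
theorem stmt_12 {m p : ℕ} (k : ℕ) (D₀ W : Matrix (Fin m) (Fin p) ℝ) (v : Fin p → ℝ)
    (δ : ℝ) (hδ1 : δ < 1)
    -- δ is an admissible RIP constant of order k for D₀:
    (hRIP : ∀ J : Finset (Fin p), J.card = k → ∀ z : {j // j ∈ J} → ℝ,
      (1 - δ) * (∑ j, (z j) ^ 2) ≤ ∑ i, ((colSub D₀ J).mulVec z i) ^ 2 ∧
      ∑ i, ((colSub D₀ J).mulVec z i) ^ 2 ≤ (1 + δ) * (∑ j, (z j) ^ 2))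
    (hD : ∀ j, ∑ i, (D₀ i j) ^ 2 = 1)
    (hW : ∀ j, ∑ i, (W i j) ^ 2 = 1)
    (horth : ∀ j, ∑ i, W i j * D₀ i j = 0)
    (hv : ∑ j, (v j) ^ 2 = 1)
    (t t' : ℝ) (ht0 : 0 ≤ t') (ht't : t' ≤ t) (ht : t < Real.sqrt (1 - δ))
    (Dt : Matrix (Fin m) (Fin p) ℝ)
    (hDt : ∀ i j, Dt i j = Real.cos (v j * t') * D₀ i j + Real.sin (v j * t') * W i j)
    (J : Finset (Fin p)) (hJ : J.card = k) :
    IsUnit (gram Dt J) ∧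
    (∀ z : {j // j ∈ J} → ℝ,
      l2norm ((colSub Dt J).mulVec z) ≤ 1 / (Real.sqrt (1 - δ) - t) * l2norm z) ∧
    (∀ z : {j // j ∈ J} → ℝ,
      l2norm ((gram Dt J)⁻¹.mulVec z) ≤ (1 / (Real.sqrt (1 - δ) - t)) ^ 2 * l2norm z) ∧
    (∀ z : {j // j ∈ J} → ℝ,
      l2norm ((colSub Dt J * (gram Dt J)⁻¹).mulVec z)
        ≤ 1 / (Real.sqrt (1 - δ) - t) * l2norm z) :=
  stmt_12_general k D₀ W v δ hRIP hD hW horth hv t t' ht0 ht't ht Dt hDt J hJ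
end

section
/- Let D₀ ∈ ℝ^{m×p} with unit-norm columns and coherence μ₀, and for t ≥ 0 define μ(t) = μ₀ + 3t. Then for any W with unit-norm columns orthogonal to the corresponding columns of D₀, any unit vector v ∈ ℝ^p, and any t ≥ 0, the coherence of D(t) = D₀·Diag(cos(vⱼt)) + W·Diag(sin(vⱼt)) satisfies max_{i≠j} |⟨dⁱ(t), dʲ(t)⟩| ≤ μ₀ + 3t. -/
open Real

private lemma cs_bound {m : ℕ} (x y : Fin m → ℝ) (hx : ∑ i, (x i) ^ 2 = 1)
    (hy : ∑ i, (y i) ^ 2 = 1) : |∑ i, x i * y i| ≤ 1 := by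
  have h2 : (∑ i, x i * y i) ^ 2 ≤ 1 := by
    have := Finset.sum_mul_sq_le_sq_mul_sq Finset.univ x y
    rw [hx, hy] at this; simpa using this
  nlinarith [abs_nonneg (∑ i, x i * y i), sq_abs (∑ i, x i * y i)]

private lemma sin_bd {p : ℕ} (v : Fin p → ℝ) (t : ℝ) (ht : 0 ≤ t)
    (hv : ∑ j, (v j) ^ 2 = 1) (j : Fin p) : |Real.sin (v j * t)| ≤ t := by
  have h1 : (v j) ^ 2 ≤ 1 := by
    rw [← hv]
    exact Finset.single_le_sum (fun k _ => sq_nonneg (v k)) (Finset.mem_univ j)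
  have h2 : |v j| ≤ 1 := by
    rw [← Real.sqrt_one, ← Real.sqrt_sq_eq_abs]
    exact Real.sqrt_le_sqrt h1
  calc |Real.sin (v j * t)| ≤ |v j * t| := Real.abs_sin_le_abs
    _ = |v j| * t := by rw [abs_mul, abs_of_nonneg ht]
    _ ≤ 1 * t := by gcongr
    _ = t := one_mul t

/-- Coherence of the perturbed dictionary: `μ(D(t)) ≤ μ₀ + 3t`. -/
theorem stmt_18 {m p : ℕ} (D₀ W : Matrix (Fin m) (Fin p) ℝ) (v : Fin p → ℝ)
    (t μ₀ : ℝ) (ht : 0 ≤ t)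
    (hD : ∀ j, ∑ i, (D₀ i j) ^ 2 = 1)
    (hW : ∀ j, ∑ i, (W i j) ^ 2 = 1)
    (horth : ∀ j, ∑ i, W i j * D₀ i j = 0)
    (hv : ∑ j, (v j) ^ 2 = 1)
    (hμ : ∀ i j, i ≠ j → |∑ l, D₀ l i * D₀ l j| ≤ μ₀)
    (Dt : Matrix (Fin m) (Fin p) ℝ)
    (hDt : ∀ i j, Dt i j = Real.cos (v j * t) * D₀ i j + Real.sin (v j * t) * W i j) :
    ∀ i j, i ≠ j → |∑ l, Dt l i * Dt l j| ≤ μ₀ + 3 * t := by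
  intro i j hij
  set ci := Real.cos (v i * t)
  set cj := Real.cos (v j * t)
  set si := Real.sin (v i * t)
  set sj := Real.sin (v j * t)
  set S := ∑ l, D₀ l i * D₀ l j with hSdef
  set A := ∑ l, D₀ l i * W l j with hAdef
  set B := ∑ l, W l i * D₀ l j with hBdef
  set C := ∑ l, W l i * W l j with hCdef
  have expand : (∑ l, Dt l i * Dt l j) = ci * cj * S + ci * sj * A + si * cj * B + si * sj * C := by
    rw [hSdef, hAdef, hBdef, hCdef]
    simp only [hDt, Finset.mul_sum, ← Finset.sum_add_distrib]
    exact Finset.sum_congr rfl fun l _ => by ring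
  have hS : |S| ≤ μ₀ := hμ i j hij
  have hA : |A| ≤ 1 := cs_bound _ _ (hD i) (hW j)
  have hB : |B| ≤ 1 := cs_bound _ _ (hW i) (hD j)
  have hC : |C| ≤ 1 := cs_bound _ _ (hW i) (hW j)
  have hci : |ci| ≤ 1 := Real.abs_cos_le_one _
  have hcj : |cj| ≤ 1 := Real.abs_cos_le_one _
  have hsi : |si| ≤ t := sin_bd v t ht hv i
  have hsj : |sj| ≤ t := sin_bd v t ht hv j
  have hsj1 : |sj| ≤ 1 := Real.abs_sin_le_one _
  have hsi1 : |si| ≤ 1 := Real.abs_sin_le_one _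
  rw [expand]
  calc |ci * cj * S + ci * sj * A + si * cj * B + si * sj * C|
      ≤ |ci * cj * S + ci * sj * A + si * cj * B| + |si * sj * C| := abs_add_le _ _
    _ ≤ (|ci * cj * S| + |ci * sj * A| + |si * cj * B|) + |si * sj * C| := by
        gcongr; exact abs_add_three _ _ _
    _ = |ci| * |cj| * |S| + |ci| * |sj| * |A| + |si| * |cj| * |B| + |si| * |sj| * |C| := by
        simp [abs_mul]
    _ ≤ 1 * 1 * μ₀ + 1 * t * 1 + t * 1 * 1 + t * 1 * 1 := by
        gcongr <;> first | exact abs_nonneg _ | positivity |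
          exact (abs_nonneg _).trans hS
    _ ≤ μ₀ + 3 * t := by linarith
end
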